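/- arXiv:math/0009215 — 3 statements merged into one kernel-verified Lean document; each statement's English description precedes it below -/
import Mathlib

section
/- Let D₁, D₂ ⊆ ℂ be domains. If at least one of D₁, D₂ is biholomorphic to ℂ∗ := ℂ \ {0}, then the Hahn and Kobayashi–Royden pseudometrics of the product coincide: h_{D₁×D₂}(z;X) = κ_{D₁×D₂}(z;X) for all z ∈ D₁×D₂ and X ∈ ℂ². -/
open Set Metric Complex

noncomputable section

/-- The open unit disc `E` in `ℂ`. -/
def unitDisc : Set ℂ := Metric.ball (0 : ℂ) 1

/-- The Kobayashi–Royden pseudometric of a set `D` in a complex normed space: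
`κ_D(z;X) = inf {|α| : ∃ holomorphic f : E → D, f(0) = z, α·f'(0) = X}`. -/
def kobayashi {V : Type*} [NormedAddCommGroup V] [NormedSpace ℂ V]
    (D : Set V) (z X : V) : ℝ :=
  sInf {r : ℝ | ∃ (α : ℂ) (f : ℂ → V), ‖α‖ = r ∧
    DifferentiableOn ℂ f unitDisc ∧ MapsTo f unitDisc D ∧
    f 0 = z ∧ α • deriv f 0 = X}

/-- The Hahn pseudometric of a set `D` in a complex normed space:
`h_D(z;X) = inf {|α| : ∃ injective holomorphic f : E → D, f(0) = z, α·f'(0) = X}`. -/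
def hahn {V : Type*} [NormedAddCommGroup V] [NormedSpace ℂ V]
    (D : Set V) (z X : V) : ℝ :=
  sInf {r : ℝ | ∃ (α : ℂ) (f : ℂ → V), ‖α‖ = r ∧
    DifferentiableOn ℂ f unitDisc ∧ MapsTo f unitDisc D ∧ InjOn f unitDisc ∧
    f 0 = z ∧ α • deriv f 0 = X}

/-- `D₁` is biholomorphic to `D₂`: there is a holomorphic bijection `f : D₁ → D₂`
with holomorphic inverse. -/
def Biholomorphic (D₁ D₂ : Set ℂ) : Prop :=
  ∃ f g : ℂ → ℂ, DifferentiableOn ℂ f D₁ ∧ DifferentiableOn ℂ g D₂ ∧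
    MapsTo f D₁ D₂ ∧ MapsTo g D₂ D₁ ∧
    (∀ z ∈ D₁, g (f z) = z) ∧ (∀ w ∈ D₂, f (g w) = w)

/-!
Swapping the factors if needed, let `v : ℂ∗ → D₂` be a biholomorphism and put
`e w = v (w₀ eʷ)` with `v w₀ = z₂`, so that `e a = e b` forces `eᵃ = eᵇ`. For `X₁ ≠ 0`, take
any holomorphic disc `(φ, _)` realising `X` for the Kobayashi metric and replace its second
coordinate by `e ∘ ψ`, `ψ w = w + d (φ w - φ 0)`, with `d` chosen so that the tangent vector at
`0` is unchanged. The new disc is injective: on a fibre of `φ`, `e ∘ ψ` is `exp` up to a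
constant factor, and `exp` is injective on the unit disc. For `X₁ = 0` both metrics vanish:
`w ↦ (z₁ + t (e^{Cw} - 1 - Cw), e (Cw))` is an injective disc with tangent vector
`(0, e'(0) C)`, and `C` can be taken arbitrarily large.
-/

open scoped Real Topology

theorem isOpen_unitDisc : IsOpen unitDisc := isOpen_ball

theorem zero_mem_unitDisc : (0 : ℂ) ∈ unitDisc := mem_ball_self one_pos

theorem norm_lt_one_of_mem_unitDisc {w : ℂ} (hw : w ∈ unitDisc) : ‖w‖ < 1 := by
  simpa [unitDisc] using hw

theorem injOn_exp_unitDisc : InjOn exp unitDisc := by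
  have him : ∀ w ∈ unitDisc, -π < w.im ∧ w.im ≤ π := fun w hw => by
    have := (abs_im_le_norm w).trans_lt (norm_lt_one_of_mem_unitDisc hw)
    constructor <;> linarith [abs_lt.mp this, Real.pi_gt_three]
  intro a ha b hb hab
  rw [← log_exp (him a ha).1 (him a ha).2, hab, log_exp (him b hb).1 (him b hb).2]

section

variable {V W : Type*} [NormedAddCommGroup V] [NormedSpace ℂ V]
  [NormedAddCommGroup W] [NormedSpace ℂ W]

def kobayashiRadii (D : Set V) (z X : V) : Set ℝ :=
  {r : ℝ | ∃ (α : ℂ) (f : ℂ → V), ‖α‖ = r ∧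
    DifferentiableOn ℂ f unitDisc ∧ MapsTo f unitDisc D ∧
    f 0 = z ∧ α • deriv f 0 = X}

def hahnRadii (D : Set V) (z X : V) : Set ℝ :=
  {r : ℝ | ∃ (α : ℂ) (f : ℂ → V), ‖α‖ = r ∧
    DifferentiableOn ℂ f unitDisc ∧ MapsTo f unitDisc D ∧ InjOn f unitDisc ∧
    f 0 = z ∧ α • deriv f 0 = X}

theorem kobayashi_eq_sInf (D : Set V) (z X : V) :
    kobayashi D z X = sInf (kobayashiRadii D z X) := rfl

theorem hahn_eq_sInf (D : Set V) (z X : V) :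
    hahn D z X = sInf (hahnRadii D z X) := rfl

theorem hahnRadii_subset_kobayashiRadii (D : Set V) (z X : V) :
    hahnRadii D z X ⊆ kobayashiRadii D z X := by
  rintro r ⟨α, f, hr, hf, hfD, -, hf0, hX⟩
  exact ⟨α, f, hr, hf, hfD, hf0, hX⟩

theorem nonneg_of_mem_kobayashiRadii {D : Set V} {z X : V} {r : ℝ}
    (hr : r ∈ kobayashiRadii D z X) : 0 ≤ r := by
  obtain ⟨α, -, rfl, -⟩ := hr
  exact norm_nonneg α

theorem hasDerivAt_deriv_zero_of_differentiableOn_unitDisc {f : ℂ → V}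
    (hf : DifferentiableOn ℂ f unitDisc) : HasDerivAt f (deriv f 0) 0 :=
  (hf.differentiableAt (isOpen_unitDisc.mem_nhds zero_mem_unitDisc)).hasDerivAt

theorem deriv_continuousLinearEquiv_comp_zero (L : V ≃L[ℂ] W) {f : ℂ → V}
    (hf : DifferentiableOn ℂ f unitDisc) : deriv (L ∘ f) 0 = L (deriv f 0) :=
  ((L : V →L[ℂ] W).hasFDerivAt.comp_hasDerivAt 0
    (hasDerivAt_deriv_zero_of_differentiableOn_unitDisc hf)).deriv

theorem kobayashiRadii_subset_of_mapsTo (L : V ≃L[ℂ] W) {D : Set V} {D' : Set W}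
    (hL : MapsTo L D D') (z X : V) :
    kobayashiRadii D z X ⊆ kobayashiRadii D' (L z) (L X) := by
  rintro r ⟨α, f, hr, hf, hfD, hf0, hX⟩
  refine ⟨α, L ∘ f, hr, L.differentiable.comp_differentiableOn hf, hL.comp hfD,
    by simp [hf0], ?_⟩
  rw [deriv_continuousLinearEquiv_comp_zero L hf, ← map_smul, hX]

theorem hahnRadii_subset_of_mapsTo (L : V ≃L[ℂ] W) {D : Set V} {D' : Set W}
    (hL : MapsTo L D D') (z X : V) :
    hahnRadii D z X ⊆ hahnRadii D' (L z) (L X) := by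
  rintro r ⟨α, f, hr, hf, hfD, hfinj, hf0, hX⟩
  refine ⟨α, L ∘ f, hr, L.differentiable.comp_differentiableOn hf, hL.comp hfD,
    L.injective.comp_injOn hfinj, by simp [hf0], ?_⟩
  rw [deriv_continuousLinearEquiv_comp_zero L hf, ← map_smul, hX]

end

theorem mapsTo_prodComm_prod (s t : Set ℂ) :
    MapsTo (ContinuousLinearEquiv.prodComm ℂ ℂ ℂ) (s ×ˢ t) (t ×ˢ s) :=
  fun _ hp => ⟨hp.2, hp.1⟩

theorem kobayashi_prod_comm (D₁ D₂ : Set ℂ) (z X : ℂ × ℂ) :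
    kobayashi (D₁ ×ˢ D₂) z X = kobayashi (D₂ ×ˢ D₁) z.swap X.swap := by
  rw [kobayashi_eq_sInf, kobayashi_eq_sInf]
  refine congrArg sInf (Subset.antisymm ?_ ?_)
  · exact kobayashiRadii_subset_of_mapsTo _ (mapsTo_prodComm_prod D₁ D₂) z X
  · exact kobayashiRadii_subset_of_mapsTo _ (mapsTo_prodComm_prod D₂ D₁) z.swap X.swap

theorem hahn_prod_comm (D₁ D₂ : Set ℂ) (z X : ℂ × ℂ) :
    hahn (D₁ ×ˢ D₂) z X = hahn (D₂ ×ˢ D₁) z.swap X.swap := by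
  rw [hahn_eq_sInf, hahn_eq_sInf]
  refine congrArg sInf (Subset.antisymm ?_ ?_)
  · exact hahnRadii_subset_of_mapsTo _ (mapsTo_prodComm_prod D₁ D₂) z X
  · exact hahnRadii_subset_of_mapsTo _ (mapsTo_prodComm_prod D₂ D₁) z.swap X.swap

theorem Real.sInf_eq_zero_of_forall_exists_le {s : Set ℝ} (hs : ∀ x ∈ s, 0 ≤ x)
    (hsmall : ∀ ε > 0, ∃ x ∈ s, x ≤ ε) : sInf s = 0 := by
  refine le_antisymm (le_of_forall_pos_le_add fun ε hε => ?_) (Real.sInf_nonneg hs)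
  obtain ⟨x, hx, hxε⟩ := hsmall ε hε
  exact (csInf_le ⟨0, hs⟩ hx).trans (by linarith)

/-- The properties of `w ↦ v (w₀ * exp w)`, for a biholomorphism `v : ℂ∗ → D`, that are used. -/
structure IsExpCover (e : ℂ → ℂ) (D : Set ℂ) : Prop where
  differentiable : Differentiable ℂ e
  mem : ∀ w, e w ∈ D
  deriv_zero_ne_zero : deriv e 0 ≠ 0
  exp_eq_of_apply_eq : ∀ {a b : ℂ}, e a = e b → exp a = exp b

theorem deriv_ne_zero_of_leftInverse {u v : ℂ → ℂ} {w : ℂ} (hu : DifferentiableAt ℂ u (v w))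
    (hv : DifferentiableAt ℂ v w) (huv : u ∘ v =ᶠ[𝓝 w] id) : deriv v w ≠ 0 := by
  intro h
  have := deriv_comp w hu hv
  rw [huv.deriv_eq, deriv_id, h, mul_zero] at this
  exact one_ne_zero this

theorem Biholomorphic.exists_isExpCover {D : Set ℂ} (hD : IsOpen D)
    (hbh : Biholomorphic D {0}ᶜ) {z : ℂ} (hz : z ∈ D) :
    ∃ e : ℂ → ℂ, IsExpCover e D ∧ e 0 = z := by
  obtain ⟨u, v, hu, hv, huD, hvD, hvu, huv⟩ := hbh
  have hw₀ : u z ≠ 0 := huD hz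
  have hvw₀ : v (u z) = z := hvu z hz
  have hv_at : ∀ w ≠ 0, DifferentiableAt ℂ v w := fun w hw =>
    hv.differentiableAt (isOpen_compl_singleton.mem_nhds hw)
  have hcov : ∀ w, u z * exp w ≠ 0 := fun w => mul_ne_zero hw₀ (exp_ne_zero w)
  have hexp : HasDerivAt (fun w => u z * exp w) (u z) 0 := by
    simpa using (hasDerivAt_exp 0).const_mul (u z)
  have hv' : deriv v (u z) ≠ 0 := by
    refine deriv_ne_zero_of_leftInverse (hvw₀ ▸ hu.differentiableAt (hD.mem_nhds hz))
      (hv_at _ hw₀) ?_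
    filter_upwards [isOpen_compl_singleton.mem_nhds hw₀] with w hw using huv w hw
  refine ⟨fun w => v (u z * exp w), ⟨fun w => ?_, fun w => hvD (hcov w), ?_, ?_⟩, ?_⟩
  · exact (hv_at _ (hcov w)).comp w (by fun_prop)
  · have := (hv_at _ (hcov 0)).hasDerivAt.comp 0 hexp
    rw [show u z * exp 0 = u z by simp, Function.comp_def] at this
    rw [this.deriv]
    exact mul_ne_zero hv' hw₀
  · intro a b hab
    have := congrArg u hab
    rw [huv _ (hcov a), huv _ (hcov b)] at this
    exact mul_left_cancel₀ hw₀ this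
  · simp [hvw₀]

theorem exists_ne_zero_mapsTo_add_mul {D : Set ℂ} (hD : IsOpen D) {z : ℂ} (hz : z ∈ D)
    {k : ℂ → ℂ} (hk : Continuous k) :
    ∃ t : ℂ, t ≠ 0 ∧ MapsTo (fun w => z + t * k w) unitDisc D := by
  obtain ⟨δ, hδ, hball⟩ := Metric.isOpen_iff.mp hD z hz
  obtain ⟨M, hM⟩ := (isCompact_closedBall (0 : ℂ) 1).exists_bound_of_continuousOn hk.continuousOn
  have hM₀ : 0 ≤ M := (norm_nonneg _).trans (hM 0 (mem_closedBall_self zero_le_one))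
  refine ⟨(δ / (M + 1) : ℝ), by exact_mod_cast (div_pos hδ (by linarith)).ne', fun w hw => ?_⟩
  apply hball
  have hkw : ‖k w‖ ≤ M := hM w (ball_subset_closedBall hw)
  rw [mem_ball, dist_eq, add_sub_cancel_left, norm_mul, norm_real, Real.norm_of_nonneg
    (by positivity), div_mul_eq_mul_div, div_lt_iff₀ (by linarith)]
  nlinarith

namespace IsExpCover

variable {e : ℂ → ℂ} {D₁ D₂ : Set ℂ}

theorem mem_hahnRadii_prod (he : IsExpCover e D₂) {φ : ℂ → ℂ}
    (hφ : DifferentiableOn ℂ φ unitDisc) (hφD : MapsTo φ unitDisc D₁) {α : ℂ} {X : ℂ × ℂ}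
    (hX₁ : α * deriv φ 0 = X.1) (hX₁_ne : X.1 ≠ 0) :
    ‖α‖ ∈ hahnRadii (D₁ ×ˢ D₂) (φ 0, e 0) X := by
  have hα : α ≠ 0 := left_ne_zero_of_mul (hX₁ ▸ hX₁_ne)
  have hφ' : deriv φ 0 ≠ 0 := right_ne_zero_of_mul (hX₁ ▸ hX₁_ne)
  set d := (X.2 / (α * deriv e 0) - 1) / deriv φ 0
  set ψ : ℂ → ℂ := fun w => w + d * (φ w - φ 0)
  have hψ : HasDerivAt ψ (1 + d * deriv φ 0) 0 :=
    (hasDerivAt_id 0).add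
      (((hasDerivAt_deriv_zero_of_differentiableOn_unitDisc hφ).sub_const (φ 0)).const_mul d)
  have hψ0 : ψ 0 = 0 := by simp [ψ]
  have hG : HasDerivAt (fun w => (φ w, e (ψ w)))
      (deriv φ 0, deriv e 0 * (1 + d * deriv φ 0)) 0 := by
    have he0 : HasDerivAt e (deriv e 0) (ψ 0) := by
      rw [hψ0]; exact (he.differentiable 0).hasDerivAt
    exact (hasDerivAt_deriv_zero_of_differentiableOn_unitDisc hφ).prodMk (he0.comp 0 hψ)
  refine ⟨α, fun w => (φ w, e (ψ w)), rfl, ?_, fun w hw => ⟨hφD hw, he.mem _⟩, ?_, ?_, ?_⟩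
  · exact hφ.prodMk (he.differentiable.comp_differentiableOn
      (differentiableOn_id.add ((hφ.sub_const _).const_mul d)))
  · intro a ha b hb hab
    have hφab : φ a = φ b := congrArg Prod.fst hab
    have hexp := he.exp_eq_of_apply_eq (congrArg Prod.snd hab)
    simp only [ψ, exp_add] at hexp
    rw [hφab] at hexp
    exact injOn_exp_unitDisc ha hb (mul_right_cancel₀ (exp_ne_zero _) hexp)
  · simp [hψ0]
  · rw [hG.deriv, Prod.smul_mk, smul_eq_mul, smul_eq_mul, hX₁]
    have he' := he.deriv_zero_ne_zero
    congr 1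
    simp only [d]
    field_simp
    ring

theorem mem_hahnRadii_prod_of_fst_eq_zero (he : IsExpCover e D₂) (hD₁ : IsOpen D₁) {z₁ : ℂ}
    (hz₁ : z₁ ∈ D₁) {X : ℂ × ℂ} (hX₁ : X.1 = 0) {C : ℂ} (hC : C ≠ 0) :
    ‖X.2 / (deriv e 0 * C)‖ ∈ hahnRadii (D₁ ×ˢ D₂) (z₁, e 0) X := by
  set k : ℂ → ℂ := fun w => exp (C * w) - 1 - C * w
  obtain ⟨t, ht, hmaps⟩ := exists_ne_zero_mapsTo_add_mul hD₁ hz₁ (k := k) (by fun_prop)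
  have hCw : HasDerivAt (fun w => C * w) C 0 := by simpa using (hasDerivAt_id' 0).const_mul C
  have hk : HasDerivAt k 0 0 := by
    simpa [k] using (hCw.cexp.sub_const 1).fun_sub hCw
  have hG : HasDerivAt (fun w => (z₁ + t * k w, e (C * w))) (0, deriv e 0 * C) 0 := by
    have hfst : HasDerivAt (fun w => z₁ + t * k w) 0 0 := by
      simpa using (hk.const_mul t).const_add z₁
    refine hfst.prodMk ?_
    have he0 : HasDerivAt e (deriv e 0) (C * 0) := by
      rw [mul_zero]; exact (he.differentiable 0).hasDerivAt
    exact he0.comp 0 hCw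
  refine ⟨_, fun w => (z₁ + t * k w, e (C * w)), rfl, ?_, fun w hw => ⟨hmaps hw, he.mem _⟩,
    ?_, by simp [k], ?_⟩
  · exact (Differentiable.prodMk (by fun_prop)
      (he.differentiable.comp (by fun_prop))).differentiableOn
  · intro a _ b _ hab
    obtain ⟨hkab, heab⟩ := Prod.ext_iff.mp hab
    have hexp := he.exp_eq_of_apply_eq heab
    have : C * a = C * b := by
      have := mul_left_cancel₀ ht (add_left_cancel hkab)
      simp only [k, hexp] at this
      linear_combination -this
    exact mul_left_cancel₀ hC this
  · rw [hG.deriv, Prod.smul_mk, smul_zero, smul_eq_mul,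
      div_mul_cancel₀ _ (mul_ne_zero he.deriv_zero_ne_zero hC)]
    exact Prod.ext hX₁.symm rfl

theorem exists_mem_hahnRadii_prod_le (he : IsExpCover e D₂) (hD₁ : IsOpen D₁) {z₁ : ℂ}
    (hz₁ : z₁ ∈ D₁) {X : ℂ × ℂ} (hX₁ : X.1 = 0) :
    ∀ ε > 0, ∃ r ∈ hahnRadii (D₁ ×ˢ D₂) (z₁, e 0) X, r ≤ ε := by
  intro ε hε
  have he' : 0 < ‖deriv e 0‖ := norm_pos_iff.mpr he.deriv_zero_ne_zero
  set C : ℝ := ‖X.2‖ / (‖deriv e 0‖ * ε) + 1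
  have hC : 0 < C := by positivity
  refine ⟨_, he.mem_hahnRadii_prod_of_fst_eq_zero hD₁ hz₁ hX₁ (C := C)
    (by exact_mod_cast hC.ne'), ?_⟩
  rw [norm_div, norm_mul, norm_real, Real.norm_of_nonneg hC.le, div_le_iff₀ (by positivity)]
  have : ‖X.2‖ = ‖deriv e 0‖ * ε * (‖X.2‖ / (‖deriv e 0‖ * ε)) := by field_simp
  nlinarith

theorem hahn_prod_eq_kobayashi (he : IsExpCover e D₂) (hD₁ : IsOpen D₁) {z₁ : ℂ}
    (hz₁ : z₁ ∈ D₁) (X : ℂ × ℂ) :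
    hahn (D₁ ×ˢ D₂) (z₁, e 0) X = kobayashi (D₁ ×ˢ D₂) (z₁, e 0) X := by
  rw [hahn_eq_sInf, kobayashi_eq_sInf]
  have hsub := hahnRadii_subset_kobayashiRadii (D₁ ×ˢ D₂) (z₁, e 0) X
  by_cases hX₁ : X.1 = 0
  · have hsmall := he.exists_mem_hahnRadii_prod_le hD₁ hz₁ hX₁
    rw [Real.sInf_eq_zero_of_forall_exists_le (fun _ hr => nonneg_of_mem_kobayashiRadii (hsub hr))
      hsmall, Real.sInf_eq_zero_of_forall_exists_le (fun _ => nonneg_of_mem_kobayashiRadii)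
      fun ε hε => (hsmall ε hε).imp fun _ hr => ⟨hsub hr.1, hr.2⟩]
  · refine congrArg sInf (Subset.antisymm hsub ?_)
    rintro _ ⟨α, F, rfl, hF, hFD, hF0, hFX⟩
    have hF₁ : HasDerivAt (fun w => (F w).1) (deriv F 0).1 0 := by
      have := hasFDerivAt_fst.comp_hasDerivAt 0
        (hasDerivAt_deriv_zero_of_differentiableOn_unitDisc hF)
      exact this
    have := he.mem_hahnRadii_prod hF.fst (fun w hw => (hFD hw).1) (α := α) (X := X)
      (by rw [hF₁.deriv, ← hFX]; rfl) hX₁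
    rwa [hF0] at this

end IsExpCover

theorem hahn_prod_eq_kobayashi_of_biholomorphic {D₁ D₂ : Set ℂ} (hD₁ : IsOpen D₁)
    (hD₂ : IsOpen D₂) (hbh : Biholomorphic D₂ {0}ᶜ) :
    ∀ z ∈ D₁ ×ˢ D₂, ∀ X : ℂ × ℂ, hahn (D₁ ×ˢ D₂) z X = kobayashi (D₁ ×ˢ D₂) z X := by
  rintro ⟨z₁, z₂⟩ ⟨hz₁, hz₂⟩ X
  obtain ⟨e, he, rfl⟩ := hbh.exists_isExpCover hD₂ hz₂
  exact he.hahn_prod_eq_kobayashi hD₁ hz₁ X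

/-- If `D₁, D₂ ⊆ ℂ` are domains and at least one of them is biholomorphic to
`ℂ∗ = ℂ \\ {0}`, then the Hahn and Kobayashi–Royden pseudometrics of `D₁ × D₂` coincide. -/
theorem stmt1 (D₁ D₂ : Set ℂ) (hD₁ : IsOpen D₁ ∧ IsConnected D₁)
    (hD₂ : IsOpen D₂ ∧ IsConnected D₂)
    (hbh : Biholomorphic D₁ {(0 : ℂ)}ᶜ ∨ Biholomorphic D₂ {(0 : ℂ)}ᶜ) :
    ∀ z ∈ D₁ ×ˢ D₂, ∀ X : ℂ × ℂ, hahn (D₁ ×ˢ D₂) z X = kobayashi (D₁ ×ˢ D₂) z X := by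
  rcases hbh with hbh | hbh
  · intro z hz X
    rw [hahn_prod_comm, kobayashi_prod_comm]
    exact hahn_prod_eq_kobayashi_of_biholomorphic hD₂.1 hD₁.1 hbh z.swap ⟨hz.2, hz.1⟩ X.swap
  · exact hahn_prod_eq_kobayashi_of_biholomorphic hD₁.1 hD₂.1 hbh
end
end

section
/- Let d ∈ (0,1) and let ψ be a holomorphic automorphism of the unit disc E with no fixed points in E, satisfying ψ(−d) = d and (ψ'(−d))² = 1. Then ψ = h_c with c = −2d/(1+d²), where h_a(z) := (z − a)/(1 − conj(a)·z). -/
open Set Metric Complex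

noncomputable section

/-- An automorphism of the unit disc: a biholomorphic map of `E` onto itself. -/
def IsDiscAut (φ : ℂ → ℂ) : Prop :=
  DifferentiableOn ℂ φ unitDisc ∧ MapsTo φ unitDisc unitDisc ∧
  ∃ ψ : ℂ → ℂ, DifferentiableOn ℂ ψ unitDisc ∧ MapsTo ψ unitDisc unitDisc ∧
    (∀ z ∈ unitDisc, ψ (φ z) = z) ∧ (∀ z ∈ unitDisc, φ (ψ z) = z)

/-- The Möbius automorphism `h_a(z) = (z - a)/(1 - conj(a)·z)` of the unit disc. -/
def hMob (a z : ℂ) : ℂ := (z - a) / (1 - (starRingEnd ℂ) a * z)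

/-!
Conjugating `ψ` by Möbius maps that send `0` to `-d` and `d` to `0` gives a holomorphic
self-map `G` of the disc with `G 0 = 0` and `|G'(0)| = |ψ'(-d)| = 1`. By the equality case of
Schwarz's lemma `G` is the rotation `z ↦ λ z` with `λ = ψ'(-d) = ±1`, so
`ψ = h_{-d} ∘ (λ ·) ∘ h_{-d}`. For `λ = -1` this map fixes `0`, hence `λ = 1` and
`ψ = h_{-d} ∘ h_{-d}`, which is `h_c` by a direct computation.
-/

lemma mem_unitDisc {z : ℂ} : z ∈ unitDisc ↔ ‖z‖ < 1 := mem_ball_zero_iff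

lemma one_sub_conj_mul_ne_zero {a z : ℂ} (ha : ‖a‖ < 1) (hz : ‖z‖ < 1) :
    1 - starRingEnd ℂ a * z ≠ 0 := by
  intro h
  have h1 : ‖starRingEnd ℂ a * z‖ = 1 := by rw [← sub_eq_zero.1 h, norm_one]
  rw [norm_mul, Complex.norm_conj] at h1
  nlinarith [norm_nonneg a, norm_nonneg z]

lemma norm_hMob_lt_one {a z : ℂ} (ha : ‖a‖ < 1) (hz : ‖z‖ < 1) : ‖hMob a z‖ < 1 := by
  have hD := one_sub_conj_mul_ne_zero ha hz
  have key : Complex.normSq (1 - starRingEnd ℂ a * z) - Complex.normSq (z - a)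
      = (1 - Complex.normSq a) * (1 - Complex.normSq z) := by
    simp only [Complex.normSq_apply, Complex.sub_re, Complex.sub_im, Complex.mul_re,
      Complex.mul_im, Complex.conj_re, Complex.conj_im, Complex.one_re, Complex.one_im]
    ring
  have ha2 : Complex.normSq a < 1 := by rw [← Complex.sq_norm]; nlinarith [norm_nonneg a]
  have hz2 : Complex.normSq z < 1 := by rw [← Complex.sq_norm]; nlinarith [norm_nonneg z]
  rw [hMob, norm_div, div_lt_one (norm_pos_iff.2 hD), Complex.norm_def, Complex.norm_def]
  exact Real.sqrt_lt_sqrt (Complex.normSq_nonneg _)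
    (by nlinarith [mul_pos (sub_pos.2 ha2) (sub_pos.2 hz2)])

lemma mapsTo_hMob {a : ℂ} (ha : ‖a‖ < 1) : MapsTo (hMob a) unitDisc unitDisc :=
  fun _ hz => mem_unitDisc.2 (norm_hMob_lt_one ha (mem_unitDisc.1 hz))

@[simp] lemma hMob_zero (a : ℂ) : hMob a 0 = -a := by simp [hMob]

@[simp] lemma hMob_self (a : ℂ) : hMob a a = 0 := by simp [hMob]

lemma hMob_neg_hMob {a z : ℂ} (ha : ‖a‖ < 1) (hz : ‖z‖ < 1) :
    hMob (-a) (hMob a z) = z := by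
  have hz' : 1 - z * starRingEnd ℂ a ≠ 0 := by
    rw [mul_comm]; exact one_sub_conj_mul_ne_zero ha hz
  have ha' : 1 - a * starRingEnd ℂ a ≠ 0 := by
    rw [mul_comm]; exact one_sub_conj_mul_ne_zero ha ha
  have hsum : 1 - z * starRingEnd ℂ a + (z - a) * starRingEnd ℂ a ≠ 0 := by
    intro h; exact ha' (by linear_combination h)
  simp only [hMob, map_neg, sub_neg_eq_add, neg_mul]
  field_simp
  ring

lemma hMob_hMob_neg {a z : ℂ} (ha : ‖a‖ < 1) (hz : ‖z‖ < 1) :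
    hMob a (hMob (-a) z) = z := by
  simpa using hMob_neg_hMob (a := -a) (by simpa using ha) hz

lemma hasDerivAt_hMob {a z : ℂ} (h : 1 - starRingEnd ℂ a * z ≠ 0) :
    HasDerivAt (hMob a) ((1 - starRingEnd ℂ a * a) / (1 - starRingEnd ℂ a * z) ^ 2) z := by
  have hnum : HasDerivAt (fun w : ℂ => w - a) 1 z := (hasDerivAt_id z).sub_const a
  have hden : HasDerivAt (fun w : ℂ => 1 - starRingEnd ℂ a * w) (-starRingEnd ℂ a) z := by
    simpa using ((hasDerivAt_id z).const_mul (starRingEnd ℂ a)).const_sub 1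
  refine (hnum.div hden h).congr_deriv ?_
  field_simp
  ring

lemma differentiableOn_hMob {a : ℂ} (ha : ‖a‖ < 1) : DifferentiableOn ℂ (hMob a) unitDisc :=
  fun _ hz => (hasDerivAt_hMob (one_sub_conj_mul_ne_zero ha (mem_unitDisc.1 hz)))
    |>.differentiableAt.differentiableWithinAt

lemma hMob_hMob_ofReal {r : ℝ} (hr : |r| < 1) {w : ℂ} (hw : ‖w‖ < 1) :
    hMob r (hMob r w) = hMob ((2 * r / (1 + r ^ 2) : ℝ) : ℂ) w := by
  have hr' : ‖(r : ℂ)‖ < 1 := by rwa [Complex.norm_real]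
  have hc : ‖((2 * r / (1 + r ^ 2) : ℝ) : ℂ)‖ < 1 := by
    rw [Complex.norm_real, Real.norm_eq_abs, abs_div, abs_of_pos (by positivity : 0 < 1 + r ^ 2),
      div_lt_one (by positivity), abs_mul, abs_two]
    nlinarith [sq_abs r]
  have h1 := one_sub_conj_mul_ne_zero hr' hw
  have h2 := one_sub_conj_mul_ne_zero hr' (norm_hMob_lt_one hr' hw)
  have h3 := one_sub_conj_mul_ne_zero hc hw
  simp only [hMob, Complex.conj_ofReal] at h1 h2 h3 ⊢
  have h1' : (1 : ℂ) - w * r ≠ 0 := by rwa [mul_comm]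
  have hpos : (1 : ℂ) + r ^ 2 ≠ 0 := by exact_mod_cast (by positivity : (1 + r ^ 2 : ℝ) ≠ 0)
  rw [div_eq_div_iff h2 h3]
  push_cast
  field_simp
  ring

lemma eqOn_deriv_mul_of_mapsTo_unitDisc {f : ℂ → ℂ} (hf : DifferentiableOn ℂ f unitDisc)
    (hmaps : MapsTo f unitDisc unitDisc) (h0 : f 0 = 0) (hder : ‖deriv f 0‖ = 1) :
    EqOn f (fun z => deriv f 0 * z) unitDisc := by
  have hmaps' : MapsTo f (ball 0 1) (closedBall (f 0) 1) := by
    rw [h0]; exact hmaps.mono_right ball_subset_closedBall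
  have haffine := Complex.affine_of_mapsTo_ball_of_norm_dslope_eq_div hf hmaps'
    (mem_ball_self one_pos) (by rw [dslope_same, hder, div_one])
  intro z hz
  simpa [h0, mul_comm] using haffine hz

lemma eqOn_hMob_of_norm_deriv_mul_eq {f : ℂ → ℂ} {p q : ℂ} (hp : ‖p‖ < 1) (hq : ‖q‖ < 1)
    (hf : DifferentiableOn ℂ f unitDisc) (hmaps : MapsTo f unitDisc unitDisc) (hfp : f p = q)
    (hnorm : ‖deriv f p‖ * (1 - ‖p‖ ^ 2) = 1 - ‖q‖ ^ 2) :
    EqOn f (fun w => hMob (-q) (deriv f p * ((1 - ‖p‖ ^ 2) / (1 - ‖q‖ ^ 2) : ℝ) * hMob p w))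
      unitDisc := by
  have hnp : ‖-p‖ < 1 := by rwa [norm_neg]
  have hp2 : 0 < 1 - ‖p‖ ^ 2 := by nlinarith [norm_nonneg p]
  have hq2 : 0 < 1 - ‖q‖ ^ 2 := by nlinarith [norm_nonneg q]
  set G := hMob q ∘ f ∘ hMob (-p)
  have hG0 : G 0 = 0 := by simp [G, hfp]
  have hGdiff : DifferentiableOn ℂ G unitDisc :=
    (differentiableOn_hMob hq).comp (hf.comp (differentiableOn_hMob hnp) (mapsTo_hMob hnp))
      (hmaps.comp (mapsTo_hMob hnp))
  have hGmaps : MapsTo G unitDisc unitDisc :=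
    (mapsTo_hMob hq).comp (hmaps.comp (mapsTo_hMob hnp))
  have hGderiv : deriv G 0 = deriv f p * ((1 - ‖p‖ ^ 2) / (1 - ‖q‖ ^ 2) : ℝ) := by
    have hinner := hasDerivAt_hMob (a := -p) (z := 0) (by simp)
    have hmid : HasDerivAt f (deriv f p) (hMob (-p) 0) := by
      rw [hMob_zero, neg_neg]
      exact (hf.differentiableAt (isOpen_ball.mem_nhds (mem_unitDisc.2 hp))).hasDerivAt
    have houter := hasDerivAt_hMob (a := q) (z := f (hMob (-p) 0))
      (by simpa [hfp] using one_sub_conj_mul_ne_zero hq hq)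
    rw [(houter.comp 0 (hmid.comp 0 hinner)).deriv]
    simp only [hMob_zero, neg_neg, hfp, map_neg, neg_mul_neg, mul_zero, sub_zero, one_pow, div_one,
      Complex.conj_mul']
    have hq2' : (1 : ℂ) - (‖q‖ : ℂ) ^ 2 ≠ 0 := by exact_mod_cast hq2.ne'
    push_cast
    field_simp
  have hGlin := eqOn_deriv_mul_of_mapsTo_unitDisc hGdiff hGmaps hG0 (by
    rw [hGderiv, norm_mul, Complex.norm_real, Real.norm_eq_abs, abs_div, abs_of_pos hp2,
      abs_of_pos hq2, ← mul_div_assoc, hnorm, div_self hq2.ne'])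
  intro w hw
  have hpw : hMob p w ∈ unitDisc := mapsTo_hMob hp hw
  have hGw := hGlin hpw
  simp only [G, Function.comp_apply, hMob_neg_hMob hp (mem_unitDisc.1 hw), hGderiv] at hGw
  dsimp only
  rw [← hGw, hMob_neg_hMob hq (mem_unitDisc.1 (hmaps hw))]

/-- If `d ∈ (0,1)` and `ψ` is a fixed-point-free automorphism of the unit disc
with `ψ(-d) = d` and `(ψ'(-d))² = 1`, then `ψ = h_c` with `c = -2d/(1+d²)`. -/
theorem stmt14 (d : ℝ) (hd : d ∈ Set.Ioo (0 : ℝ) 1) (ψ : ℂ → ℂ) (hψ : IsDiscAut ψ)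
    (hfix : ∀ z ∈ unitDisc, ψ z ≠ z)
    (hval : ψ (-(d : ℂ)) = (d : ℂ)) (hder : (deriv ψ (-(d : ℂ)))^2 = 1) :
    EqOn ψ (hMob ((-(2 * d / (1 + d^2)) : ℝ) : ℂ)) unitDisc := by
  obtain ⟨hdiff, hmaps, -⟩ := hψ
  have hd1 : |d| < 1 := abs_lt.2 ⟨by linarith [hd.1], hd.2⟩
  have hdn : ‖(d : ℂ)‖ < 1 := by rwa [Complex.norm_real]
  have hL : ‖deriv ψ (-(d : ℂ))‖ = 1 := by
    simpa [pow_eq_one_iff_of_nonneg (norm_nonneg _)] using congrArg norm hder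
  have hrep : ∀ w ∈ unitDisc, ψ w = hMob (-d) (deriv ψ (-(d : ℂ)) * hMob (-d) w) := by
    intro w hw
    have := eqOn_hMob_of_norm_deriv_mul_eq (by rwa [norm_neg]) hdn hdiff hmaps hval
      (by rw [hL, norm_neg, one_mul]) hw
    have hd2 : 1 - ‖(d : ℂ)‖ ^ 2 ≠ 0 := by nlinarith [norm_nonneg (d : ℂ)]
    rwa [norm_neg, div_self hd2, Complex.ofReal_one, mul_one] at this
  rcases sq_eq_one_iff.1 hder with h1 | hm1
  · intro w hw
    rw [hrep w hw, h1, one_mul]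
    simpa [neg_div] using hMob_hMob_ofReal (r := -d) (by rwa [abs_neg]) (mem_unitDisc.1 hw)
  · exfalso
    apply hfix 0 (mem_unitDisc.2 (by simp))
    simp [hrep 0 (mem_unitDisc.2 (by simp)), hm1]
end
end

section
/- Let D₂ ⊆ ℂ be a domain, let θ ∈ (0,1), and let f = (f₁,f₂) : E → ℂ∗ × D₂ be holomorphic with f₁(0) = 1, f₂'(0) ≠ 0, and θ·f₁'(0) ≠ 1 (and arbitrary values otherwise). Let M := max{|f₂(z)| : |z| ≤ θ} and choose k ∈ ℕ with |c_k| > M, where c_k := f₂(0) − k·θ·f₂'(0)/(θ·f₁'(0) − 1). Define h(z) := (f₂(θz) − c_k)/(f₂(0) − c_k), g₁(z) := (1+z)·h(z)^k and g(z) := (g₁(z), f₂(θz)). Then g is an injective holomorphic map from E to ℂ∗ × D₂ with g(0) = f(0) and g'(0) = θ·f'(0). -/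
open Set Metric Complex

noncomputable section

/-!
Since `|f₂(θz)| ≤ M < |c_k|` on `E`, the factor `h` never vanishes there, so `g₁` has no
zeros other than `z = -1 ∉ E`, and `g(z) = g(w)` forces first `f₂(θz) = f₂(θw)`, hence
`h(z) = h(w) ≠ 0`, hence `1 + z = 1 + w`. Since `h(0) = 1`,
`g₁'(0) = 1 + k h'(0) = 1 + kθf₂'(0)/(f₂(0) - c_k)`, and `c_k` is chosen exactly so that
this equals `θf₁'(0)`.
-/

lemma norm_le_sSup_image_norm {X Y : Type*} [TopologicalSpace X] [NormedAddCommGroup Y]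
    {f : X → Y} {K : Set X} (hK : IsCompact K) (hf : ContinuousOn f K) {w : X} (hw : w ∈ K) :
    ‖f w‖ ≤ sSup ((fun z => ‖f z‖) '' K) :=
  le_csSup (hK.image_of_continuousOn (continuous_norm.comp_continuousOn hf)).bddAbove
    ⟨w, hw, rfl⟩

lemma ne_of_sSup_image_norm_lt {X Y : Type*} [TopologicalSpace X] [NormedAddCommGroup Y]
    {f : X → Y} {K : Set X} (hK : IsCompact K) (hf : ContinuousOn f K) {c : Y}
    (hc : sSup ((fun z => ‖f z‖) '' K) < ‖c‖) {w : X} (hw : w ∈ K) : f w ≠ c := by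
  rintro rfl
  exact hc.not_ge (norm_le_sSup_image_norm hK hf hw)

lemma closedBall_subset_unitDisc {r : ℝ} (hr : r < 1) : closedBall (0 : ℂ) r ⊆ unitDisc :=
  closedBall_subset_ball hr

lemma ofReal_mul_mem_closedBall {r : ℝ} (hr : 0 ≤ r) {z : ℂ} (hz : z ∈ unitDisc) :
    (r : ℂ) * z ∈ closedBall (0 : ℂ) r := by
  rw [unitDisc, mem_ball_zero_iff] at hz
  rw [mem_closedBall_zero_iff, norm_mul, Complex.norm_real, Real.norm_of_nonneg hr]
  exact mul_le_of_le_one_right hr hz.le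

lemma one_add_ne_zero_of_mem_unitDisc {z : ℂ} (hz : z ∈ unitDisc) : 1 + z ≠ 0 := by
  intro h
  rw [unitDisc, mem_ball_zero_iff, eq_neg_of_add_eq_zero_right h] at hz
  simp at hz

lemma injOn_one_add_mul_pow_prod {s : Set ℂ} {F φ : ℂ → ℂ} (k : ℕ)
    (hφ : ∀ z ∈ s, φ (F z) ≠ 0) :
    InjOn (fun z => ((1 + z) * φ (F z) ^ k, F z)) s := by
  intro z hz w _ hzw
  obtain ⟨h₁, h₂⟩ := Prod.ext_iff.mp hzw
  dsimp only at h₁ h₂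
  rw [← h₂] at h₁
  exact add_left_cancel (mul_right_cancel₀ (pow_ne_zero k (hφ z hz)) h₁)

lemma HasDerivAt.one_add_mul_pow {h : ℂ → ℂ} {h' : ℂ} (hh : HasDerivAt h h' 0) (h0 : h 0 = 1)
    (k : ℕ) : HasDerivAt (fun z => (1 + z) * h z ^ k) (1 + k * h') 0 :=
  ((hasDerivAt_id' 0).const_add 1 |>.mul (hh.fun_pow k)).congr_deriv (by simp [h0])

lemma hasDerivAt_comp_const_mul_zero {f : ℂ → ℂ} (a : ℂ) (hf : DifferentiableAt ℂ f 0) :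
    HasDerivAt (fun z => f (a * z)) (a * deriv f 0) 0 := by
  have hf' : HasDerivAt f (deriv f 0) (a * 0) := by
    rw [mul_zero]
    exact hf.hasDerivAt
  exact (hf'.comp 0 ((hasDerivAt_id' 0).const_mul a)).congr_deriv (by ring)

theorem stmt17_general (D₂ : Set ℂ)
    (θ : ℝ) (hθ : θ ∈ Set.Ioo (0 : ℝ) 1) (f₁ f₂ : ℂ → ℂ)
    (hf₂ : DifferentiableOn ℂ f₂ unitDisc)
    (hf₂m : MapsTo f₂ unitDisc D₂)
    (hf₁0 : f₁ 0 = 1)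
    (M : ℝ) (hM : M = sSup ((fun z => ‖f₂ z‖) '' Metric.closedBall 0 θ))
    (k : ℕ) (c : ℂ)
    (hc : c = f₂ 0 - (k : ℂ) * ((θ : ℂ) * deriv f₂ 0) / ((θ : ℂ) * deriv f₁ 0 - 1))
    (hk : M < ‖c‖)
    (g : ℂ → ℂ × ℂ)
    (hg : g = fun z =>
      ((1 + z) * ((f₂ ((θ : ℂ) * z) - c) / (f₂ 0 - c))^k, f₂ ((θ : ℂ) * z))) :
    DifferentiableOn ℂ g unitDisc ∧ InjOn g unitDisc ∧
      MapsTo g unitDisc ({(0 : ℂ)}ᶜ ×ˢ D₂) ∧ g 0 = (f₁ 0, f₂ 0) ∧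
      deriv g 0 = ((θ : ℂ) * deriv f₁ 0, (θ : ℂ) * deriv f₂ 0) := by
  obtain ⟨hθ0, hθ1⟩ := hθ
  subst hg hM
  have hθE : ∀ z ∈ unitDisc, (θ : ℂ) * z ∈ closedBall (0 : ℂ) θ :=
    fun z hz => ofReal_mul_mem_closedBall hθ0.le hz
  have hball := closedBall_subset_unitDisc hθ1
  have hf₂_sub_ne : ∀ w ∈ closedBall (0 : ℂ) θ, f₂ w - c ≠ 0 := fun w hw => sub_ne_zero.mpr <|
    ne_of_sSup_image_norm_lt (isCompact_closedBall 0 θ) (hf₂.continuousOn.mono hball) hk hw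
  have hd : f₂ 0 - c ≠ 0 := hf₂_sub_ne 0 (mem_closedBall_self hθ0.le)
  have hh_ne : ∀ z ∈ unitDisc, (f₂ ((θ : ℂ) * z) - c) / (f₂ 0 - c) ≠ 0 :=
    fun z hz => div_ne_zero (hf₂_sub_ne _ (hθE z hz)) hd
  have hF : DifferentiableOn ℂ (fun z => f₂ ((θ : ℂ) * z)) unitDisc :=
    hf₂.comp (differentiableOn_id.const_mul _) fun z hz => hball (hθE z hz)
  have hF0 := hasDerivAt_comp_const_mul_zero (θ : ℂ)
    (hf₂.differentiableAt (ball_mem_nhds 0 one_pos))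
  have hg₁0 : HasDerivAt (fun z => (1 + z) * ((f₂ ((θ : ℂ) * z) - c) / (f₂ 0 - c)) ^ k)
      ((θ : ℂ) * deriv f₁ 0) 0 := by
    refine ((hF0.sub_const c).div_const _).one_add_mul_pow (by simp [hd]) k |>.congr_deriv ?_
    have hd_eq : f₂ 0 - c = k * (θ * deriv f₂ 0) / (θ * deriv f₁ 0 - 1) := by rw [hc]; ring
    have hnum : (k : ℂ) * (θ * deriv f₂ 0) ≠ 0 := (div_ne_zero_iff.mp (hd_eq ▸ hd)).1
    rw [← mul_div_assoc, hd_eq, div_div_cancel₀ hnum, add_sub_cancel]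
  refine ⟨?_, injOn_one_add_mul_pow_prod (φ := fun w => (w - c) / (f₂ 0 - c)) k hh_ne,
    fun z hz => ⟨?_, hf₂m (hball (hθE z hz))⟩, by simp [hd, hf₁0], (hg₁0.prodMk hF0).deriv⟩
  · exact (((differentiableOn_const 1).add differentiableOn_id).mul
      (((hF.sub_const c).div_const _).pow k)).prodMk hF
  · exact mul_ne_zero (one_add_ne_zero_of_mem_unitDisc hz) (pow_ne_zero k (hh_ne z hz))

/-- The injectivity construction for `ℂ∗ × D₂` in the remaining case of
Proposition 3: with `M := max {|f₂(z)| : |z| ≤ θ}`,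
`c_k := f₂(0) - k·θ·f₂'(0)/(θ·f₁'(0) - 1)` with `|c_k| > M`,
`h(z) := (f₂(θz) - c_k)/(f₂(0) - c_k)`, `g₁(z) := (1+z)·h(z)^k`, and
`g := (g₁, f₂(θ·))`, the map `g` is an injective holomorphic map `E → ℂ∗ × D₂`
with `g(0) = f(0)` and `g'(0) = θ·f'(0)`. -/
theorem stmt17 (D₂ : Set ℂ) (hD₂ : IsOpen D₂ ∧ IsConnected D₂)
    (θ : ℝ) (hθ : θ ∈ Set.Ioo (0 : ℝ) 1) (f₁ f₂ : ℂ → ℂ)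
    (hf₁ : DifferentiableOn ℂ f₁ unitDisc) (hf₂ : DifferentiableOn ℂ f₂ unitDisc)
    (hf₁m : MapsTo f₁ unitDisc {(0 : ℂ)}ᶜ) (hf₂m : MapsTo f₂ unitDisc D₂)
    (hf₁0 : f₁ 0 = 1) (hf₂' : deriv f₂ 0 ≠ 0) (hf₁' : (θ : ℂ) * deriv f₁ 0 ≠ 1)
    (M : ℝ) (hM : M = sSup ((fun z => ‖f₂ z‖) '' Metric.closedBall 0 θ))
    (k : ℕ) (c : ℂ)
    (hc : c = f₂ 0 - (k : ℂ) * ((θ : ℂ) * deriv f₂ 0) / ((θ : ℂ) * deriv f₁ 0 - 1))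
    (hk : M < ‖c‖)
    (g : ℂ → ℂ × ℂ)
    (hg : g = fun z =>
      ((1 + z) * ((f₂ ((θ : ℂ) * z) - c) / (f₂ 0 - c))^k, f₂ ((θ : ℂ) * z))) :
    DifferentiableOn ℂ g unitDisc ∧ InjOn g unitDisc ∧
      MapsTo g unitDisc ({(0 : ℂ)}ᶜ ×ˢ D₂) ∧ g 0 = (f₁ 0, f₂ 0) ∧
      deriv g 0 = ((θ : ℂ) * deriv f₁ 0, (θ : ℂ) * deriv f₂ 0) :=
  stmt17_general D₂ θ hθ f₁ f₂ hf₂ hf₂m hf₁0 M hM k c hc hk g hg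
end
end
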